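/- arXiv:1601.02191 — 2 statements merged into one kernel-verified Lean document; each statement's English description precedes it below -/
import Mathlib

section
/- Let f, g : ℝ → ℝ be continuous with f monotone increasing and g monotone decreasing (antitone), let Q ∈ ℝ, and suppose there exists r ∈ ℝ with f(r) = g(r). Then min(r, Q) maximizes the surplus function s(q) = ∫₀^q (g(x) − f(x)) dx over the set {q : q ≤ Q}. (The tie-optimization rule: the optimal interchange schedule is set at the intersection of the supply and demand curves, unless that quantity exceeds the interface capacity, in which case the schedule is set at the capacity Q.) -/
/-!
The marginal surplus `g - f` is antitone and vanishes at `r`, so it is nonnegative left of `r` and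
nonpositive right of it. Hence the surplus, its primitive, increases up to `r` and decreases after
it; on `q ≤ Q` it therefore peaks at `r` if `r ≤ Q` and at the cap `Q` otherwise.
-/

open Set intervalIntegral

namespace Antitone

variable {h : ℝ → ℝ} {r : ℝ}

theorem monotoneOn_integral_Iic (hh : Antitone h) (hr : h r = 0) (a : ℝ) :
    MonotoneOn (fun q => ∫ x in a..q, h x) (Iic r) := by
  intro q _ m hm hqm
  have hnonneg : 0 ≤ ∫ x in q..m, h x :=
    integral_nonneg hqm fun x hx => hr ▸ hh (hx.2.trans hm)
  rw [← integral_interval_sub_left hh.intervalIntegrable hh.intervalIntegrable] at hnonneg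
  exact sub_nonneg.mp hnonneg

theorem antitoneOn_integral_Ici (hh : Antitone h) (hr : h r = 0) (a : ℝ) :
    AntitoneOn (fun q => ∫ x in a..q, h x) (Ici r) := by
  intro q hq p _ hqp
  have hnonpos : ∫ x in q..p, h x ≤ ∫ _ in q..p, (0 : ℝ) :=
    integral_mono_on hqp hh.intervalIntegrable intervalIntegrable_const
      fun x hx => hr ▸ hh (hq.trans hx.1)
  rw [integral_zero, ← integral_interval_sub_left hh.intervalIntegrable hh.intervalIntegrable]
    at hnonpos
  exact sub_nonpos.mp hnonpos

theorem isMaxOn_integral_min (hh : Antitone h) (hr : h r = 0) (a Q : ℝ) :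
    IsMaxOn (fun q => ∫ x in a..q, h x) (Iic Q) (min r Q) := by
  intro q (hq : q ≤ Q)
  rcases le_total r Q with hrQ | hQr
  · rw [min_eq_left hrQ]
    rcases le_total q r with hqr | hrq
    · exact hh.monotoneOn_integral_Iic hr a hqr self_mem_Iic hqr
    · exact hh.antitoneOn_integral_Ici hr a self_mem_Ici hrq hrq
  · rw [min_eq_right hQr]
    exact hh.monotoneOn_integral_Iic hr a (hq.trans hQr) hQr hq

end Antitone

theorem stmt_8_general (f g : ℝ → ℝ)
    (hf : Monotone f) (hg : Antitone g) (Q : ℝ) (r : ℝ) (hr : f r = g r)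
    (s : ℝ → ℝ) (hs : ∀ q : ℝ, s q = ∫ x in (0:ℝ)..q, (g x - f x)) :
    IsMaxOn s {q : ℝ | q ≤ Q} (min r Q) := by
  have hanti : Antitone fun x => g x - f x := fun _ _ hxy => sub_le_sub (hg hxy) (hf hxy)
  have hzero : g r - f r = 0 := sub_eq_zero.mpr hr.symm
  rw [funext hs]
  exact hanti.isMaxOn_integral_min hzero 0 Q

/-- The tie-optimization rule: the optimal interchange schedule is the
intersection of the supply and demand curves, capped at the interface
capacity `Q`. -/
theorem stmt_8 (f g : ℝ → ℝ) (hfc : Continuous f) (hgc : Continuous g)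
    (hf : Monotone f) (hg : Antitone g) (Q : ℝ) (r : ℝ) (hr : f r = g r)
    (s : ℝ → ℝ) (hs : ∀ q : ℝ, s q = ∫ x in (0:ℝ)..q, (g x - f x)) :
    IsMaxOn s {q : ℝ | q ≤ Q} (min r Q) :=
  stmt_8_general f g hf hg Q r hr s hs
end

section
/- Let f, g, b : ℝ → ℝ be continuous functions with f and b monotone increasing and g monotone decreasing (antitone), let Q ∈ ℝ, and suppose r ≤ Q satisfies f(r) + b(r) = g(r). Then r maximizes the function q ↦ ∫₀^q (g(x) − f(x) − b(x)) dx over the set {q : q ≤ Q}. (The Stochastic Coordinated Transaction Scheduling (SCTS) rule: the optimal schedule is set at the intersection of the expected supply curve adjusted by the aggregated interface bid curve and the expected demand curve, i.e., at the optimizer of problem (P6).) -/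
open intervalIntegral

theorem Antitone.integral_nonneg_of_eq_zero {h : ℝ → ℝ} (hh : Antitone h) {r : ℝ}
    (hr : h r = 0) (q : ℝ) : 0 ≤ ∫ x in q..r, h x := by
  rcases le_total q r with hqr | hrq
  · exact integral_nonneg hqr fun x hx => hr ▸ hh hx.2
  · rw [integral_symm, ← integral_neg]
    exact integral_nonneg hrq fun x hx => neg_nonneg.2 (hr ▸ hh hx.1)

theorem Antitone.isMaxOn_integral_of_eq_zero {h : ℝ → ℝ} (hh : Antitone h) {r : ℝ}
    (hr : h r = 0) (a : ℝ) (s : Set ℝ) : IsMaxOn (fun q => ∫ x in a..q, h x) s r := by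
  intro q _
  have hdiff : (∫ x in a..r, h x) - ∫ x in a..q, h x = ∫ x in q..r, h x :=
    integral_interval_sub_left hh.intervalIntegrable hh.intervalIntegrable
  exact sub_nonneg.1 (hdiff ▸ hh.integral_nonneg_of_eq_zero hr q)

theorem stmt_10_general (f g b : ℝ → ℝ) (hf : Monotone f) (hb : Monotone b) (hg : Antitone g)
    (Q : ℝ) (r : ℝ) (hr : f r + b r = g r) :
    IsMaxOn (fun q : ℝ => ∫ x in (0:ℝ)..q, (g x - f x - b x)) {q : ℝ | q ≤ Q} r := by
  have hanti : Antitone fun x => g x - f x - b x := fun x y hxy =>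
    sub_le_sub (sub_le_sub (hg hxy) (hf hxy)) (hb hxy)
  exact hanti.isMaxOn_integral_of_eq_zero (by linarith) 0 _

/-- The SCTS rule (problem (P6)): the optimal schedule is set at the
intersection of the bid-adjusted expected supply curve and the expected
demand curve. -/
theorem stmt_10 (f g b : ℝ → ℝ) (hfc : Continuous f) (hgc : Continuous g)
    (hbc : Continuous b) (hf : Monotone f) (hb : Monotone b) (hg : Antitone g)
    (Q : ℝ) (r : ℝ) (hrQ : r ≤ Q) (hr : f r + b r = g r) :
    IsMaxOn (fun q : ℝ => ∫ x in (0:ℝ)..q, (g x - f x - b x)) {q : ℝ | q ≤ Q} r :=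
  stmt_10_general f g b hf hb hg Q r hr
end
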